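/- arXiv:1604.07733 — 5 statements merged into one kernel-verified Lean document; each statement's English description precedes it below -/
import Mathlib

section
/- For every function f in the class U, we have Re(f(z)/z) > 1/2 for all z with |z| < √2 − 1. -/
/-!
Write `z / f z = 1 + z q(z)` with `q = 1 / f - 1 / z`, holomorphic on the disk. The defining
inequality of `U` says `|z² q'(z)| < 1`; two applications of the Schwarz lemma give `|q'| ≤ 1`,
so `q` is `1`-Lipschitz. Since `f` has no zeros off the origin, `1 + z q(z)` never vanishes, and a
contraction argument for `z ↦ -1 / q(z)` then forces `|q(0)| ≤ 2`. Hence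
`|z q(z)| ≤ |z| (2 + |z|) < 1` for `|z| < √2 - 1`, and `Re (1 / (1 + w)) > 1 / 2` for `|w| < 1`.
-/

open Complex Metric Set

/-- The class `U`: analytic on the unit disk, normalized, with
`|(z/f(z))^2 f'(z) - 1| < 1` on the disk (stated for `z ≠ 0`,
which handles the removable singularity at the origin). -/
def inU (f : ℂ → ℂ) : Prop :=
  DifferentiableOn ℂ f (ball (0:ℂ) 1) ∧ f 0 = 0 ∧ deriv f 0 = 1 ∧
    ∀ z ∈ ball (0:ℂ) 1, z ≠ 0 →
      ‖(z / f z) ^ 2 * deriv f z - 1‖ < 1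

theorem one_half_lt_re_inv_one_add {w : ℂ} (hw : ‖w‖ < 1) : 1 / 2 < ((1 + w)⁻¹).re := by
  have hpos : 0 < normSq (1 + w) := by
    rw [normSq_pos]
    intro h
    rw [show w = -1 by linear_combination h] at hw
    simp at hw
  have hw2 : normSq w < 1 := by rw [← Complex.sq_norm]; nlinarith [norm_nonneg w]
  rw [inv_re, lt_div_iff₀ hpos]
  simp only [normSq_apply, add_re, add_im, one_re, one_im] at hpos hw2 ⊢
  nlinarith

theorem exists_one_add_mul_eq_zero_of_lipschitzOnWith {q : ℂ → ℂ} {r : ℝ} (hr₀ : 0 < r)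
    (hr₁ : r < 1) (hq : LipschitzOnWith 1 q (closedBall 0 r))
    (hlow : ∀ z ∈ closedBall (0 : ℂ) r, r⁻¹ ≤ ‖q z‖) :
    ∃ z ∈ closedBall (0 : ℂ) r, 1 + z * q z = 0 := by
  have hq₀ : ∀ z ∈ closedBall (0 : ℂ) r, 0 < ‖q z‖ := fun z hz =>
    (inv_pos.2 hr₀).trans_le (hlow z hz)
  have hmaps : MapsTo (fun z => -(q z)⁻¹) (closedBall (0 : ℂ) r) (closedBall 0 r) := by
    intro z hz
    rw [mem_closedBall_zero_iff, norm_neg, norm_inv]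
    exact inv_le_of_inv_le₀ hr₀ (hlow z hz)
  have hlip : LipschitzOnWith (Real.toNNReal (r ^ 2)) (fun z => -(q z)⁻¹) (closedBall 0 r) := by
    refine LipschitzOnWith.of_dist_le' fun z hz w hw => ?_
    have hqz := hq₀ z hz
    have hqw := hq₀ w hw
    have hprod : r⁻¹ * r⁻¹ ≤ ‖q z‖ * ‖q w‖ :=
      mul_le_mul (hlow z hz) (hlow w hw) (by positivity) hqz.le
    have hdist : dist (q z) (q w) ≤ dist z w := by simpa using hq.dist_le_mul z hz w hw
    calc dist (-(q z)⁻¹) (-(q w)⁻¹) = dist (q z) (q w) / (‖q z‖ * ‖q w‖) := by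
          rw [dist_neg_neg, dist_eq_norm, dist_eq_norm, inv_sub_inv (norm_pos_iff.1 hqz)
            (norm_pos_iff.1 hqw), norm_div, norm_mul, norm_sub_rev]
      _ ≤ dist z w / (r⁻¹ * r⁻¹) := div_le_div₀ dist_nonneg hdist (by positivity) hprod
      _ = r ^ 2 * dist z w := by field_simp
  have hcontr : ContractingWith (Real.toNNReal (r ^ 2)) (hmaps.restrict _ _ _) :=
    ⟨by rw [Real.toNNReal_lt_one]; nlinarith, hlip.mapsToRestrict hmaps⟩
  obtain ⟨z, hz, hfix, -⟩ := hcontr.exists_fixedPoint' isClosed_closedBall.isComplete hmaps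
    (mem_closedBall_self hr₀.le) (edist_ne_top _ _)
  refine ⟨z, hz, ?_⟩
  have hqz : q z ≠ 0 := norm_pos_iff.1 (hq₀ z hz)
  have : z = -(q z)⁻¹ := hfix.symm
  nth_rw 1 [this]
  rw [neg_mul, inv_mul_cancel₀ hqz, add_neg_cancel]

theorem norm_le_two_of_lipschitzOnWith {q : ℂ → ℂ} (hq : LipschitzOnWith 1 q (ball 0 1))
    (hne : ∀ z ∈ ball (0 : ℂ) 1, 1 + z * q z ≠ 0) : ‖q 0‖ ≤ 2 := by
  by_contra! hgt
  set r := 2 / ‖q 0‖ with hr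
  have hq0 : 0 < ‖q 0‖ := by linarith
  have hr₀ : 0 < r := by positivity
  have hr₁ : r < 1 := by rwa [hr, div_lt_one hq0]
  have hsub : closedBall (0 : ℂ) r ⊆ ball 0 1 := closedBall_subset_ball hr₁
  obtain ⟨z, hz, hzero⟩ :=
    exists_one_add_mul_eq_zero_of_lipschitzOnWith hr₀ hr₁ (hq.mono hsub) fun z hz => by
      have hdist : ‖q 0 - q z‖ ≤ ‖z‖ := by
        simpa [dist_eq_norm] using hq.dist_le_mul 0 (mem_ball_self one_pos) z (hsub hz)
      have hr_le : r ≤ ‖q 0‖ / 2 := by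
        rw [hr, div_le_div_iff₀ hq0 two_pos]
        nlinarith
      rw [hr, inv_div]
      linarith [norm_sub_norm_le (q 0) (q z), mem_closedBall_zero_iff.1 hz]
  exact hne z (hsub hz) hzero

theorem mapsTo_closedBall_of_mapsTo_mul {k : ℂ → ℂ} (hk : DifferentiableOn ℂ k (ball 0 1))
    (h : MapsTo (fun z => z * k z) (ball 0 1) (closedBall 0 1)) :
    MapsTo k (ball 0 1) (closedBall 0 1) := by
  intro z hz
  have hd : DifferentiableOn ℂ (fun z => z * k z) (ball 0 1) := differentiableOn_id.mul hk
  have hslope := norm_dslope_le_div_of_mapsTo_ball hd (by simpa using h) hz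
  rw [div_one] at hslope
  have hslope_eq : dslope (fun z => z * k z) 0 z = k z := by
    rcases eq_or_ne z 0 with rfl | hz0
    · rw [dslope_same, ((hasDerivAt_id' 0).fun_mul
        (hk.differentiableAt (ball_mem_nhds 0 one_pos)).hasDerivAt).deriv]
      simp
    · rw [dslope_of_ne _ hz0, slope_def_field]
      field_simp
      ring
  rwa [hslope_eq, ← mem_closedBall_zero_iff] at hslope

/-- For `f 0 = 0` and `f' 0 = 1`, the holomorphic extension across `0` of
`z ↦ 1 / f z - 1 / z`. -/
noncomputable def invSubInv (f : ℂ → ℂ) : ℂ → ℂ :=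
  dslope (fun z => (dslope f 0 z)⁻¹) 0

section invSubInv

variable {f : ℂ → ℂ} {z : ℂ}

theorem invSubInv_of_ne (hf0 : f 0 = 0) (hf1 : deriv f 0 = 1) (hz : z ≠ 0) :
    invSubInv f z = (f z)⁻¹ - z⁻¹ := by
  rw [invSubInv, dslope_of_ne _ hz, slope_def_field, dslope_same, hf1, dslope_of_ne _ hz,
    slope_def_field, hf0]
  rcases eq_or_ne (f z) 0 with hfz | hfz
  · simp [hfz, neg_div]
  · field_simp
    ring

theorem one_add_mul_invSubInv (hf0 : f 0 = 0) (hf1 : deriv f 0 = 1) (hz : z ≠ 0) :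
    1 + z * invSubInv f z = z / f z := by
  rw [invSubInv_of_ne hf0 hf1 hz, mul_sub, mul_inv_cancel₀ hz, div_eq_mul_inv]
  ring

theorem sq_mul_deriv_invSubInv (hf0 : f 0 = 0) (hf1 : deriv f 0 = 1)
    (hfz : DifferentiableAt ℂ f z) (hz : z ≠ 0) (hfz0 : f z ≠ 0) :
    z ^ 2 * deriv (invSubInv f) z = 1 - (z / f z) ^ 2 * deriv f z := by
  have heq : invSubInv f =ᶠ[nhds z] fun t => (f t)⁻¹ - t⁻¹ := by
    filter_upwards [eventually_ne_nhds hz] with t ht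
    exact invSubInv_of_ne hf0 hf1 ht
  rw [(((hfz.hasDerivAt.inv hfz0).sub (hasDerivAt_inv hz)).congr_of_eventuallyEq heq).deriv]
  field_simp
  ring

end invSubInv

namespace inU

variable {f : ℂ → ℂ}

theorem ne_zero (hf : inU f) {z : ℂ} (hz : z ∈ ball (0 : ℂ) 1) (hz0 : z ≠ 0) :
    f z ≠ 0 := by
  intro hfz
  simpa [hfz] using hf.2.2.2 z hz hz0

theorem differentiableOn_invSubInv (hf : inU f) :
    DifferentiableOn ℂ (invSubInv f) (ball 0 1) := by
  have ⟨hfd, hf0, hf1, _⟩ := hf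
  have hnhds : ball (0 : ℂ) 1 ∈ nhds 0 := ball_mem_nhds 0 one_pos
  refine (differentiableOn_dslope hnhds).2 <|
    ((differentiableOn_dslope hnhds).2 hfd).inv fun z hz => ?_
  rcases eq_or_ne z 0 with rfl | hz0
  · simp [hf1]
  · rw [dslope_of_ne _ hz0, slope_def_field, hf0, sub_zero, sub_zero]
    exact div_ne_zero (hf.ne_zero hz hz0) hz0

theorem lipschitzOnWith_invSubInv (hf : inU f) : LipschitzOnWith 1 (invSubInv f) (ball 0 1) := by
  have ⟨hfd, hf0, hf1, hfU⟩ := hf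
  have hq := hf.differentiableOn_invSubInv
  have hq' : DifferentiableOn ℂ (deriv (invSubInv f)) (ball 0 1) := hq.deriv isOpen_ball
  have hsq : MapsTo (fun z => z * (z * deriv (invSubInv f) z)) (ball 0 1) (closedBall 0 1) := by
    intro z hz
    simp only [mem_closedBall_zero_iff, ← mul_assoc, ← sq]
    rcases eq_or_ne z 0 with rfl | hz0
    · simp
    · rw [sq_mul_deriv_invSubInv hf0 hf1
        (hfd.differentiableAt (isOpen_ball.mem_nhds hz)) hz0 (hf.ne_zero hz hz0), norm_sub_rev]
      exact (hfU z hz hz0).le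
  have hbound := mapsTo_closedBall_of_mapsTo_mul hq' <|
    mapsTo_closedBall_of_mapsTo_mul (differentiableOn_id.mul hq') hsq
  refine (convex_ball 0 1).lipschitzOnWith_of_nnnorm_deriv_le
    (fun z hz => hq.differentiableAt (isOpen_ball.mem_nhds hz)) fun z hz => ?_
  rw [← NNReal.coe_le_coe, coe_nnnorm, NNReal.coe_one, ← mem_closedBall_zero_iff]
  exact hbound hz

theorem norm_invSubInv_zero_le_two (hf : inU f) : ‖invSubInv f 0‖ ≤ 2 := by
  have ⟨_, hf0, hf1, _⟩ := hf
  refine norm_le_two_of_lipschitzOnWith hf.lipschitzOnWith_invSubInv fun z hz => ?_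
  rcases eq_or_ne z 0 with rfl | hz0
  · simp
  · rw [one_add_mul_invSubInv hf0 hf1 hz0]
    exact div_ne_zero hz0 (hf.ne_zero hz hz0)

theorem norm_invSubInv_le (hf : inU f) {z : ℂ} (hz : z ∈ ball (0 : ℂ) 1) :
    ‖invSubInv f z‖ ≤ 2 + ‖z‖ := by
  have hdist : ‖invSubInv f z - invSubInv f 0‖ ≤ ‖z‖ := by
    simpa [dist_eq_norm] using
      hf.lipschitzOnWith_invSubInv.dist_le_mul z hz 0 (mem_ball_self one_pos)
  linarith [norm_le_norm_add_norm_sub' (invSubInv f z) (invSubInv f 0),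
    hf.norm_invSubInv_zero_le_two]

end inU

theorem stmt0 (f : ℂ → ℂ) (hf : inU f) :
    ∀ z : ℂ, z ≠ 0 → ‖z‖ < Real.sqrt 2 - 1 →
      (1 : ℝ) / 2 < (f z / z).re := by
  intro z hz0 hzr
  have ⟨_, hf0, hf1, _⟩ := hf
  have hsqrt : Real.sqrt 2 ^ 2 = 2 := Real.sq_sqrt zero_le_two
  have hz : z ∈ ball (0 : ℂ) 1 := by
    rw [mem_ball_zero_iff]
    nlinarith [Real.sqrt_nonneg 2]
  have hsmall : ‖z * invSubInv f z‖ < 1 := by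
    rw [norm_mul]
    calc ‖z‖ * ‖invSubInv f z‖ ≤ ‖z‖ * (2 + ‖z‖) :=
          mul_le_mul_of_nonneg_left (hf.norm_invSubInv_le hz) (norm_nonneg z)
      _ < 1 := by nlinarith [norm_nonneg z]
  simpa [one_add_mul_invSubInv hf0 hf1 hz0] using one_half_lt_re_inv_one_add hsmall
end

section
/- If f ∈ S and g(z) = z·(f(zⁿ)/zⁿ)^{1/n} (principal branch, value 1 at 0 for the factor), then g ∈ S ∩ A_n, i.e. g is univalent on the unit disk, g(0)=0, g'(0)=1, and the Taylor coefficients of g of orders 2 through n vanish. -/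
/-!
Write `g z = z h(z)`, so that `g(z)ⁿ = f(zⁿ)`. Since `f` is injective and vanishes only at `0`,
`h` never vanishes. For an `n`-th root of unity `ω`, `z ↦ h(ωz)` and `h` are then continuous
`n`-th roots of the same function, equal at `0`; their ratio takes values in the finite set of
`n`-th roots of unity, so by connectedness `h(ωz) = h(z)`. Injectivity of `g` follows: `g a = g b`
forces `aⁿ = bⁿ`, i.e. `b = ωa`, and then `g b = ω g a`. Differentiating `h(ωz) = h(z)` `j` times
at `0` with `ω` primitive gives `h⁽ʲ⁾(0) = 0` for `0 < j < n`, and `g⁽ᵏ⁾(0) = k h⁽ᵏ⁻¹⁾(0)`.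
-/

open Complex Metric Set

theorem IsPreconnected.eqOn_of_pow_eq_pow {X 𝕜 : Type*} [TopologicalSpace X] [NormedField 𝕜]
    {S : Set X} (hS : IsPreconnected S) {u v : X → 𝕜} (hu : ContinuousOn u S)
    (hv : ContinuousOn v S) (hv0 : ∀ x ∈ S, v x ≠ 0) {n : ℕ} (hn : n ≠ 0)
    (hpow : ∀ x ∈ S, u x ^ n = v x ^ n) {x₀ : X} (hx₀ : x₀ ∈ S) (h₀ : u x₀ = v x₀) :
    EqOn u v S := by
  -- `u / v` is continuous with values in the finite, hence discrete, set of `n`-th roots of unity.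
  have hroots : MapsTo (fun x => u x / v x) S (Polynomial.nthRootsFinset n (1 : 𝕜)) := by
    intro x hx
    rw [Finset.mem_coe, Polynomial.mem_nthRootsFinset (Nat.pos_of_ne_zero hn), div_pow,
      hpow x hx, div_self (pow_ne_zero n (hv0 x hx))]
  intro x hx
  have hconst := hS.constant_of_mapsTo (Finset.finite_toSet _).isDiscrete (hu.div hv hv0) hroots
    hx hx₀
  rwa [Pi.div_apply, Pi.div_apply, h₀, div_self (hv0 x₀ hx₀), div_eq_one_iff_eq (hv0 x hx)]
    at hconst

theorem iteratedDeriv_eq_zero_of_comp_mul_eq {𝕜 : Type*} [NontriviallyNormedField 𝕜]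
    {s : Set 𝕜} (hs : IsOpen s) (hs0 : (0 : 𝕜) ∈ s) {ω : 𝕜} (hωs : MapsTo (ω * ·) s s)
    {f : 𝕜 → 𝕜} {k : ℕ} (hf : ContDiffOn 𝕜 k f s) (hfω : ∀ x ∈ s, f (ω * x) = f x)
    (hωk : ω ^ k ≠ 1) : iteratedDeriv k f 0 = 0 := by
  have hscale := iteratedDerivWithin_comp_const_smul hs0 hs.uniqueDiffOn hf ω hωs
  rw [iteratedDerivWithin_congr hfω hs0, mul_zero, smul_eq_mul] at hscale
  rw [← iteratedDerivWithin_of_isOpen hs hs0]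
  have : (ω ^ k - 1) * iteratedDerivWithin k f s 0 = 0 := by rw [sub_mul, ← hscale]; ring
  exact (mul_eq_zero.mp this).resolve_left (sub_ne_zero.mpr hωk)

theorem iteratedDeriv_succ_id_mul_zero {𝕜 : Type*} [NontriviallyNormedField 𝕜] {h : 𝕜 → 𝕜}
    {k : ℕ} (hh : ContDiffAt 𝕜 (k + 1) h 0) :
    iteratedDeriv (k + 1) (fun z => z * h z) 0 = (k + 1) * iteratedDeriv k h 0 := by
  rw [iteratedDeriv_fun_mul (f := fun z => z) contDiffAt_id hh, Finset.sum_eq_single 1]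
  · simp [iteratedDeriv_fun_id_zero]
  · intro i _ hi
    simp [iteratedDeriv_fun_id_zero, hi]
  · simp

theorem mapsTo_mul_ball_zero {𝕜 : Type*} [NormedField 𝕜] {ω : 𝕜} (hω : ‖ω‖ ≤ 1) (r : ℝ) :
    MapsTo (ω * ·) (ball (0 : 𝕜) r) (ball 0 r) := fun z hz => by
  rw [mem_ball_zero_iff] at hz ⊢
  calc ‖ω * z‖ = ‖ω‖ * ‖z‖ := norm_mul ω z
    _ ≤ ‖z‖ := mul_le_of_le_one_left (norm_nonneg z) hω
    _ < r := hz

theorem pow_mem_ball_zero_one {z : ℂ} (hz : z ∈ ball (0 : ℂ) 1) {n : ℕ} (hn : n ≠ 0) :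
    z ^ n ∈ ball (0 : ℂ) 1 := by
  rw [mem_ball_zero_iff] at hz ⊢
  rw [norm_pow]
  exact pow_lt_one₀ (norm_nonneg z) hz hn

section NthRootTransform

variable {f h : ℂ → ℂ} {n : ℕ}

theorem mul_self_pow_eq_comp_pow (hn : n ≠ 0) (hf0 : f 0 = 0)
    (hhn : ∀ z ∈ ball (0:ℂ) 1, z ≠ 0 → h z ^ n = f (z ^ n) / z ^ n) {z : ℂ}
    (hz : z ∈ ball (0:ℂ) 1) : (z * h z) ^ n = f (z ^ n) := by
  rcases eq_or_ne z 0 with rfl | hz0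
  · simp [hn, hf0]
  · rw [mul_pow, hhn z hz hz0, mul_div_cancel₀ _ (pow_ne_zero n hz0)]

theorem ne_zero_of_pow_eq_comp_pow_div (hn : n ≠ 0) (hfi : InjOn f (ball (0:ℂ) 1))
    (hf0 : f 0 = 0) (hh0 : h 0 = 1)
    (hhn : ∀ z ∈ ball (0:ℂ) 1, z ≠ 0 → h z ^ n = f (z ^ n) / z ^ n) {z : ℂ}
    (hz : z ∈ ball (0:ℂ) 1) : h z ≠ 0 := by
  intro hhz
  have hz0 : z ≠ 0 := by
    rintro rfl
    exact one_ne_zero (hh0 ▸ hhz)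
  have hfz : f (z ^ n) = f 0 := by
    rw [← mul_self_pow_eq_comp_pow hn hf0 hhn hz, hhz, mul_zero, zero_pow hn, hf0]
  exact pow_ne_zero n hz0 (hfi (pow_mem_ball_zero_one hz hn) (mem_ball_self one_pos) hfz)

theorem comp_mul_eq_of_pow_eq_one (hn : n ≠ 0) (hhc : ContinuousOn h (ball (0:ℂ) 1))
    (hh_ne : ∀ z ∈ ball (0:ℂ) 1, h z ≠ 0)
    (hhn : ∀ z ∈ ball (0:ℂ) 1, z ≠ 0 → h z ^ n = f (z ^ n) / z ^ n) {ω : ℂ} (hω : ω ^ n = 1)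
    {z : ℂ} (hz : z ∈ ball (0:ℂ) 1) : h (ω * z) = h z := by
  have hωS := mapsTo_mul_ball_zero (norm_eq_one_of_pow_eq_one hω hn).le 1
  have hω0 : ω ≠ 0 := by
    rintro rfl
    exact zero_ne_one ((zero_pow hn).symm.trans hω)
  refine (convex_ball (0:ℂ) 1).isPreconnected.eqOn_of_pow_eq_pow (u := fun y => h (ω * y))
    (hhc.comp (by fun_prop) hωS) hhc hh_ne hn ?_
    (mem_ball_self one_pos) (by simp only [mul_zero]) hz
  intro y hy
  rcases eq_or_ne y 0 with rfl | hy0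
  · simp only [mul_zero]
  · rw [hhn _ (hωS hy) (mul_ne_zero hω0 hy0), hhn y hy hy0, mul_pow, hω, one_mul]

theorem injOn_mul_self (hn : n ≠ 0) (hfi : InjOn f (ball (0:ℂ) 1)) (hf0 : f 0 = 0)
    (hh0 : h 0 = 1) (hhc : ContinuousOn h (ball (0:ℂ) 1))
    (hhn : ∀ z ∈ ball (0:ℂ) 1, z ≠ 0 → h z ^ n = f (z ^ n) / z ^ n) :
    InjOn (fun z => z * h z) (ball (0:ℂ) 1) := by
  have hh_ne := fun z (hz : z ∈ ball (0:ℂ) 1) =>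
    ne_zero_of_pow_eq_comp_pow_div hn hfi hf0 hh0 hhn hz
  intro a ha b hb hab
  simp only at hab
  have hab_n : a ^ n = b ^ n :=
    hfi (pow_mem_ball_zero_one ha hn) (pow_mem_ball_zero_one hb hn) <| by
    rw [← mul_self_pow_eq_comp_pow hn hf0 hhn ha, ← mul_self_pow_eq_comp_pow hn hf0 hhn hb, hab]
  rcases eq_or_ne a 0 with rfl | ha0
  · exact ((mul_eq_zero.mp (zero_mul (h 0) ▸ hab).symm).resolve_right (hh_ne b hb)).symm
  have hb0 : b ≠ 0 := by
    rintro rfl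
    exact ha0 ((pow_eq_zero_iff hn).mp (by rw [hab_n, zero_pow hn]))
  have hω : (b / a) ^ n = 1 := by rw [div_pow, hab_n, div_self (pow_ne_zero n hb0)]
  have hhb : h b = h a := by
    rw [← div_mul_cancel₀ b ha0]
    exact comp_mul_eq_of_pow_eq_one hn hhc hh_ne hhn hω ha
  rw [hhb] at hab
  exact mul_right_cancel₀ (hh_ne a ha) hab

end NthRootTransform

theorem stmt5_general (f : ℂ → ℂ) (n : ℕ) (hn : 1 ≤ n)
    (hfi : InjOn f (ball (0:ℂ) 1)) (hf0 : f 0 = 0)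
    (h : ℂ → ℂ) (hhd : DifferentiableOn ℂ h (ball (0:ℂ) 1)) (hh0 : h 0 = 1)
    (hhn : ∀ z ∈ ball (0:ℂ) 1, z ≠ 0 → (h z) ^ n = f (z ^ n) / z ^ n) :
    DifferentiableOn ℂ (fun z => z * h z) (ball (0:ℂ) 1) ∧
    InjOn (fun z => z * h z) (ball (0:ℂ) 1) ∧
    (fun z => z * h z) 0 = 0 ∧ deriv (fun z => z * h z) 0 = 1 ∧
    ∀ k : ℕ, 2 ≤ k → k ≤ n → iteratedDeriv k (fun z => z * h z) 0 = 0 := by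
  have hn0 : n ≠ 0 := by omega
  have h0mem : (0:ℂ) ∈ ball (0:ℂ) 1 := mem_ball_self one_pos
  have hh_ne := fun z (hz : z ∈ ball (0:ℂ) 1) =>
    ne_zero_of_pow_eq_comp_pow_div hn0 hfi hf0 hh0 hhn hz
  have hh_at : ∀ m : ℕ, ContDiffAt ℂ (m + 1) h 0 := fun m =>
    (hhd.contDiffOn isOpen_ball).contDiffAt (isOpen_ball.mem_nhds h0mem)
  refine ⟨differentiableOn_id.mul hhd, injOn_mul_self hn0 hfi hf0 hh0 hhd.continuousOn hhn,
    by simp, ?_, ?_⟩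
  · simpa [hh0] using iteratedDeriv_succ_id_mul_zero (hh_at 0)
  · intro k hk2 hkn
    obtain ⟨m, rfl⟩ : ∃ m, k = m + 1 := ⟨k - 1, by omega⟩
    obtain ⟨ω, hω⟩ : ∃ ω : ℂ, IsPrimitiveRoot ω n := ⟨_, Complex.isPrimitiveRoot_exp n hn0⟩
    have hh_rot : ∀ z ∈ ball (0:ℂ) 1, h (ω * z) = h z := fun z hz =>
      comp_mul_eq_of_pow_eq_one hn0 hhd.continuousOn hh_ne hhn hω.pow_eq_one hz
    have hDm : iteratedDeriv m h 0 = 0 :=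
      iteratedDeriv_eq_zero_of_comp_mul_eq isOpen_ball h0mem
        (mapsTo_mul_ball_zero (norm_eq_one_of_pow_eq_one hω.pow_eq_one hn0).le 1)
        (hhd.contDiffOn isOpen_ball) hh_rot (hω.pow_ne_one_of_pos_of_lt (by omega) (by omega))
    rw [iteratedDeriv_succ_id_mul_zero (hh_at m), hDm, mul_zero]

theorem stmt5 (f : ℂ → ℂ) (n : ℕ) (hn : 1 ≤ n)
    (hfd : DifferentiableOn ℂ f (ball (0:ℂ) 1))
    (hfi : InjOn f (ball (0:ℂ) 1)) (hf0 : f 0 = 0) (hf1 : deriv f 0 = 1)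
    (h : ℂ → ℂ) (hhd : DifferentiableOn ℂ h (ball (0:ℂ) 1)) (hh0 : h 0 = 1)
    (hhn : ∀ z ∈ ball (0:ℂ) 1, z ≠ 0 → (h z) ^ n = f (z ^ n) / z ^ n) :
    DifferentiableOn ℂ (fun z => z * h z) (ball (0:ℂ) 1) ∧
    InjOn (fun z => z * h z) (ball (0:ℂ) 1) ∧
    (fun z => z * h z) 0 = 0 ∧ deriv (fun z => z * h z) 0 = 1 ∧
    ∀ k : ℕ, 2 ≤ k → k ≤ n → iteratedDeriv k (fun z => z * h z) 0 = 0 :=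
  stmt5_general f n hn hfi hf0 h hhd hh0 hhn
end

section
/- Let f ∈ U and for fixed ζ in the unit disk let g(z) = (f((ζ+z)/(1+conj(ζ)z)) − f(ζ))/(f'(ζ)(1−|ζ|²)) be the Koebe transform of f at ζ. Then g ∈ U for every ζ in the unit disk if and only if |((ζ−u)² f'(ζ) f'(u))/((f(u)−f(ζ))² ) − 1| < 1 for all ζ, u in the unit disk with ζ ≠ u. -/
/-!
Write `φ_ζ z = (ζ + z) / (1 + ζ̄ z)`, so that `g = (f ∘ φ_ζ - f ζ) / (f'(ζ) (1 - |ζ|²))`.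
From `φ_ζ'(z) = (1 - |ζ|²) / (1 + ζ̄ z)²` and `ζ - φ_ζ z = -z (1 - |ζ|²) / (1 + ζ̄ z)` one gets
`(z / g z)² g'(z) = (ζ - u)² f'(ζ) f'(u) / (f u - f ζ)²` with `u = φ_ζ z`.
Since `φ_ζ` maps `D ∖ {0}` onto `D ∖ {ζ}` (with inverse `φ_{-ζ}`), the defining inequality of `U`
for `g` is exactly the stated inequality for `f`; the normalisation and analyticity of `g` are
automatic.
-/

open Complex Metric Set

open ComplexConjugate

noncomputable def diskAut (ζ z : ℂ) : ℂ := (ζ + z) / (1 + conj ζ * z)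

noncomputable def koebeTransform (f : ℂ → ℂ) (ζ z : ℂ) : ℂ :=
  (f (diskAut ζ z) - f ζ) / (deriv f ζ * (1 - ((‖ζ‖ : ℝ) : ℂ) ^ 2))

lemma one_add_conj_mul_ne_zero {a b : ℂ} (ha : ‖a‖ < 1) (hb : ‖b‖ < 1) :
    1 + conj a * b ≠ 0 := by
  have : ‖conj a * b‖ < 1 := by
    rw [norm_mul, norm_conj]
    nlinarith [norm_nonneg a, norm_nonneg b]
  intro h
  simp [eq_neg_of_add_eq_zero_right h] at this

lemma one_sub_conj_mul_self_ne_zero {a : ℂ} (ha : ‖a‖ < 1) : 1 - conj a * a ≠ 0 := by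
  simpa [sub_eq_add_neg] using one_add_conj_mul_ne_zero (a := -a) (by simpa using ha) ha

lemma normSq_add_lt_normSq_one_add_conj_mul {a b : ℂ} (ha : ‖a‖ < 1) (hb : ‖b‖ < 1) :
    normSq (a + b) < normSq (1 + conj a * b) := by
  have hgap : normSq (1 + conj a * b) - normSq (a + b) = (1 - normSq a) * (1 - normSq b) := by
    simp only [normSq_apply, add_re, add_im, mul_re, mul_im, conj_re, conj_im, one_re, one_im]
    ring
  have hna : normSq a < 1 := by rw [normSq_eq_norm_sq]; nlinarith [norm_nonneg a]
  have hnb : normSq b < 1 := by rw [normSq_eq_norm_sq]; nlinarith [norm_nonneg b]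
  nlinarith

lemma norm_diskAut_lt_one {ζ z : ℂ} (hζ : ‖ζ‖ < 1) (hz : ‖z‖ < 1) : ‖diskAut ζ z‖ < 1 := by
  have hd := one_add_conj_mul_ne_zero hζ hz
  rw [diskAut, norm_div, div_lt_one (norm_pos_iff.mpr hd), norm_def, norm_def]
  exact Real.sqrt_lt_sqrt (normSq_nonneg _) (normSq_add_lt_normSq_one_add_conj_mul hζ hz)

lemma diskAut_diskAut_neg {ζ u : ℂ} (hζ : ‖ζ‖ < 1) (hu : ‖u‖ < 1) :
    diskAut ζ (diskAut (-ζ) u) = u := by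
  have hd := one_add_conj_mul_ne_zero (a := -ζ) (by simpa using hζ) hu
  have hs := one_sub_conj_mul_self_ne_zero hζ
  rw [map_neg, neg_mul, ← sub_eq_add_neg] at hd
  have hnum : ζ + diskAut (-ζ) u = u * (1 - conj ζ * ζ) / (1 - conj ζ * u) := by
    rw [diskAut, map_neg, neg_mul, ← sub_eq_add_neg, eq_div_iff hd, add_mul,
      div_mul_cancel₀ _ hd]
    ring
  have hden : 1 + conj ζ * diskAut (-ζ) u = (1 - conj ζ * ζ) / (1 - conj ζ * u) := by
    rw [diskAut, map_neg, neg_mul, ← sub_eq_add_neg, eq_div_iff hd, add_mul, mul_assoc,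
      div_mul_cancel₀ _ hd]
    ring
  rw [diskAut, hnum, hden, div_div_div_cancel_right₀ hd, mul_div_cancel_right₀ _ hs]

lemma self_sub_diskAut {ζ z : ℂ} (hz : 1 + conj ζ * z ≠ 0) :
    ζ - diskAut ζ z = -(z * (1 - conj ζ * ζ)) / (1 + conj ζ * z) := by
  rw [diskAut, eq_div_iff hz, sub_mul, div_mul_cancel₀ _ hz]
  ring

lemma hasDerivAt_diskAut {ζ z : ℂ} (hz : 1 + conj ζ * z ≠ 0) :
    HasDerivAt (diskAut ζ) ((1 - conj ζ * ζ) / (1 + conj ζ * z) ^ 2) z := by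
  have h := ((hasDerivAt_id z).const_add ζ).div
    (((hasDerivAt_id z).const_mul (conj ζ)).const_add 1) hz
  exact h.congr_deriv (by simp only [id]; ring)

lemma diskAut_zero (ζ : ℂ) : diskAut ζ 0 = ζ := by simp [diskAut]

lemma diskAut_eq_self_iff {ζ z : ℂ} (hζ : ‖ζ‖ < 1) (hz : ‖z‖ < 1) :
    diskAut ζ z = ζ ↔ z = 0 := by
  rw [eq_comm, ← sub_eq_zero, self_sub_diskAut (one_add_conj_mul_ne_zero hζ hz)]
  simp [one_add_conj_mul_ne_zero hζ hz, one_sub_conj_mul_self_ne_zero hζ]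

lemma forall_ne_zero_diskAut_iff {ζ : ℂ} (hζ : ‖ζ‖ < 1) (p : ℂ → Prop) :
    (∀ z ∈ ball (0 : ℂ) 1, z ≠ 0 → p (diskAut ζ z)) ↔ ∀ u ∈ ball (0 : ℂ) 1, ζ ≠ u → p u := by
  simp only [mem_ball_zero_iff]
  constructor
  · intro h u hu hζu
    have hz : ‖diskAut (-ζ) u‖ < 1 := norm_diskAut_lt_one (by simpa using hζ) hu
    have hinv := diskAut_diskAut_neg hζ hu
    refine hinv ▸ h _ hz fun h0 => hζu ?_
    rw [← hinv, (diskAut_eq_self_iff hζ hz).mpr h0]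
  · intro h z hz hz0
    exact h _ (norm_diskAut_lt_one hζ hz) fun he => hz0 ((diskAut_eq_self_iff hζ hz).mp he.symm)

lemma koebeTransform_eq (f : ℂ → ℂ) (ζ : ℂ) :
    koebeTransform f ζ = fun z => (f (diskAut ζ z) - f ζ) / (deriv f ζ * (1 - conj ζ * ζ)) := by
  rw [conj_mul']
  rfl

lemma hasDerivAt_koebeTransform {f : ℂ → ℂ} {ζ z : ℂ} (hf : DifferentiableAt ℂ f (diskAut ζ z))
    (hz : 1 + conj ζ * z ≠ 0) :
    HasDerivAt (koebeTransform f ζ)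
      (deriv f (diskAut ζ z) * ((1 - conj ζ * ζ) / (1 + conj ζ * z) ^ 2) /
        (deriv f ζ * (1 - conj ζ * ζ))) z := by
  rw [koebeTransform_eq]
  exact ((hf.hasDerivAt.comp z (hasDerivAt_diskAut hz)).sub_const _).div_const _

lemma koebeTransform_ratio {f : ℂ → ℂ} {ζ z : ℂ} (hf : DifferentiableAt ℂ f (diskAut ζ z))
    (hz : 1 + conj ζ * z ≠ 0) :
    (z / koebeTransform f ζ z) ^ 2 * deriv (koebeTransform f ζ) z =
      (ζ - diskAut ζ z) ^ 2 * deriv f ζ * deriv f (diskAut ζ z) / (f (diskAut ζ z) - f ζ) ^ 2 := by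
  rw [(hasDerivAt_koebeTransform hf hz).deriv, koebeTransform_eq, self_sub_diskAut hz]
  field_simp

lemma deriv_ne_zero_of_inU {f : ℂ → ℂ} (hf : inU f) {z : ℂ} (hz : z ∈ ball (0 : ℂ) 1) :
    deriv f z ≠ 0 := by
  rcases eq_or_ne z 0 with rfl | hz0
  · simp [hf.2.2.1]
  · intro h
    simpa [h] using hf.2.2.2 z hz hz0

lemma inU_koebeTransform_iff {f : ℂ → ℂ} (hf : inU f) {ζ : ℂ} (hζ : ‖ζ‖ < 1) :
    inU (koebeTransform f ζ) ↔ ∀ u ∈ ball (0 : ℂ) 1, ζ ≠ u →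
      ‖(ζ - u) ^ 2 * deriv f ζ * deriv f u / (f u - f ζ) ^ 2 - 1‖ < 1 := by
  have hdiff : ∀ z ∈ ball (0 : ℂ) 1, DifferentiableAt ℂ f (diskAut ζ z) := fun z hz =>
    hf.1.differentiableAt (isOpen_ball.mem_nhds
      (mem_ball_zero_iff.mpr (norm_diskAut_lt_one hζ (mem_ball_zero_iff.mp hz))))
  have hden : ∀ z ∈ ball (0 : ℂ) 1, 1 + conj ζ * z ≠ 0 := fun z hz =>
    one_add_conj_mul_ne_zero hζ (mem_ball_zero_iff.mp hz)
  have hzero : (0 : ℂ) ∈ ball (0 : ℂ) 1 := mem_ball_self one_pos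
  have hderiv : deriv (koebeTransform f ζ) 0 = 1 := by
    rw [(hasDerivAt_koebeTransform (hdiff 0 hzero) (hden 0 hzero)).deriv, diskAut_zero,
      mul_zero, add_zero, one_pow, div_one, div_self]
    exact mul_ne_zero (deriv_ne_zero_of_inU hf (mem_ball_zero_iff.mpr hζ))
      (one_sub_conj_mul_self_ne_zero hζ)
  refine ⟨fun hg => ?_,
    fun h => ⟨fun z hz => ?_, by simp [koebeTransform, diskAut_zero], hderiv, ?_⟩⟩
  · rw [← forall_ne_zero_diskAut_iff hζ]
    intro z hz hz0
    exact koebeTransform_ratio (hdiff z hz) (hden z hz) ▸ hg.2.2.2 z hz hz0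
  · exact (hasDerivAt_koebeTransform (hdiff z hz) (hden z hz)).differentiableAt
      |>.differentiableWithinAt
  · rw [← forall_ne_zero_diskAut_iff hζ] at h
    intro z hz hz0
    exact (koebeTransform_ratio (hdiff z hz) (hden z hz)).symm ▸ h z hz hz0

theorem stmt10 (f : ℂ → ℂ) (hf : inU f) :
    (∀ ζ ∈ ball (0:ℂ) 1,
        inU (fun z => (f ((ζ + z) / (1 + (starRingEnd ℂ) ζ * z)) - f ζ) /
          (deriv f ζ * (1 - ((‖ζ‖ : ℝ) : ℂ) ^ 2)))) ↔
    (∀ ζ ∈ ball (0:ℂ) 1, ∀ u ∈ ball (0:ℂ) 1, ζ ≠ u →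
        ‖(ζ - u) ^ 2 * deriv f ζ * deriv f u / (f u - f ζ) ^ 2 - 1‖ < 1) :=
  forall₂_congr fun _ hζ => inU_koebeTransform_iff hf (mem_ball_zero_iff.mp hζ)
end

section
/- Let n ≥ 3 be an integer and define g(φ) = (2 cos φ)^{2/n − 1} sin φ − sin(2φ/n) for φ ∈ [0, π/2). Then g(φ) ≥ 0 for all φ ∈ [0, π/2). -/
open Complex Metric Set

/-!
With `α = 2/n ∈ (0, 2/3]`, `c = cos φ` and `s = sin φ`, three elementary bounds give
`sin (α φ) ≤ α φ ≤ α (2 - c) s` and, by Bernoulli's inequality for the negative exponent `α - 1`,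
`(2c)^(α-1) ≥ 1 + (α - 1)(2c - 1)`. The difference of the resulting bounds is
`(1 - c)(2 - 3α) s ≥ 0`.
-/

namespace Real

theorem le_two_sub_cos_mul_sin {x : ℝ} (hx0 : 0 ≤ x) (hx : x ≤ π / 2) :
    x ≤ (2 - cos x) * sin x := by
  let f : ℝ → ℝ := fun t => (2 - cos t) * sin t - t
  have hderiv : ∀ t, HasDerivAt f (2 * cos t * (1 - cos t)) t := by
    intro t
    have h := (((hasDerivAt_cos t).const_sub 2).mul (hasDerivAt_sin t)).sub (hasDerivAt_id t)
    exact h.congr_deriv (by linear_combination sin_sq_add_cos_sq t)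
  have hmono : MonotoneOn f (Icc 0 (π / 2)) := by
    refine monotoneOn_of_deriv_nonneg (convex_Icc _ _)
      (fun t _ => (hderiv t).continuousAt.continuousWithinAt)
      (fun t _ => (hderiv t).differentiableAt.differentiableWithinAt) fun t ht => ?_
    rw [interior_Icc] at ht
    rw [(hderiv t).deriv]
    have hcos : 0 ≤ cos t := cos_nonneg_of_mem_Icc ⟨by linarith [pi_pos, ht.1], ht.2.le⟩
    exact mul_nonneg (mul_nonneg zero_le_two hcos) (sub_nonneg.2 (cos_le_one t))
  have := hmono ⟨le_rfl, by positivity⟩ ⟨hx0, hx⟩ hx0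
  simpa [f] using this

theorem one_add_mul_sub_one_le_rpow_of_nonpos {t a : ℝ} (ht : 0 < t) (ha : a ≤ 0) :
    1 + a * (t - 1) ≤ t ^ a :=
  calc 1 + a * (t - 1) ≤ a * log t + 1 := by nlinarith [log_le_sub_one_of_pos ht]
    _ ≤ exp (log t * a) := by rw [mul_comm]; exact add_one_le_exp _
    _ = t ^ a := (rpow_def_of_pos ht a).symm

theorem sin_mul_le_two_mul_cos_rpow_mul_sin {α φ : ℝ} (hα0 : 0 ≤ α) (hα : α ≤ 2 / 3)
    (hφ0 : 0 ≤ φ) (hφ : φ < π / 2) :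
    sin (α * φ) ≤ (2 * cos φ) ^ (α - 1) * sin φ := by
  have hc : 0 < cos φ := cos_pos_of_mem_Ioo ⟨by linarith [pi_pos], hφ⟩
  have hc1 : cos φ ≤ 1 := cos_le_one φ
  have hs : 0 ≤ sin φ := sin_nonneg_of_nonneg_of_le_pi hφ0 (by linarith [pi_pos])
  calc sin (α * φ) ≤ α * φ := sin_le (by positivity)
    _ ≤ α * ((2 - cos φ) * sin φ) :=
        mul_le_mul_of_nonneg_left (le_two_sub_cos_mul_sin hφ0 hφ.le) hα0
    _ ≤ (1 + (α - 1) * (2 * cos φ - 1)) * sin φ := by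
        nlinarith [mul_nonneg (mul_nonneg (sub_nonneg.2 hc1) (by linarith : 0 ≤ 2 - 3 * α)) hs]
    _ ≤ (2 * cos φ) ^ (α - 1) * sin φ := by
        gcongr
        exact one_add_mul_sub_one_le_rpow_of_nonpos (by positivity) (by linarith)

end Real

theorem stmt14 (n : ℕ) (hn : 3 ≤ n) (φ : ℝ) (hφ0 : 0 ≤ φ) (hφ : φ < Real.pi / 2) :
    0 ≤ (2 * Real.cos φ) ^ ((2 : ℝ) / n - 1) * Real.sin φ - Real.sin (2 * φ / n) := by
  have hn3 : (3 : ℝ) ≤ n := by exact_mod_cast hn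
  have hα : (2 : ℝ) / n ≤ 2 / 3 := div_le_div_of_nonneg_left (by norm_num) (by norm_num) hn3
  rw [sub_nonneg, mul_div_right_comm]
  exact Real.sin_mul_le_two_mul_cos_rpow_mul_sin (by positivity) hα hφ0 hφ
end

section
/- For every integer n ≥ 2 and real x ≥ 0, letting φ = arctan x ∈ [0, π/2), one has sin(2φ/n) ≤ (x/2)·(4/(1+x²))^{1/n}. -/
open Complex Metric Set

/-!
With `φ = arctan x` and `t = 2/n ∈ (0, 1]`, the right-hand side equals `sin φ · (2 cos φ)^(t-1)`.
Concavity of `sin` on `[0, π]` gives `sin (tφ) ≤ sin φ + (t - 1) φ cos φ`, and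
`sin φ · log (2 cos φ) ≤ φ cos φ` (since `log (2c) < c`) turns this into
`sin (tφ) ≤ sin φ · (1 + (t - 1) log (2 cos φ)) ≤ sin φ · exp ((t - 1) log (2 cos φ))`.
-/

namespace Real

lemma sin_le_sin_add_mul_cos {a b : ℝ} (ha : a ∈ Icc 0 π) (hb : b ∈ Icc 0 π) :
    sin a ≤ sin b + (a - b) * cos b := by
  have hconc := strictConcaveOn_sin_Icc.concaveOn
  rcases lt_trichotomy a b with hab | rfl | hba
  · have := hconc.le_slope_of_hasDerivAt ha hb hab (hasDerivAt_sin b)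
    rw [slope_def_field, le_div_iff₀ (sub_pos.2 hab)] at this
    linarith
  · simp
  · have := hconc.slope_le_of_hasDerivAt hb ha hba (hasDerivAt_sin b)
    rw [slope_def_field, div_le_iff₀ (sub_pos.2 hba)] at this
    linarith

lemma log_two_mul_lt {c : ℝ} (hc : 0 < c) : log (2 * c) < c := by
  rw [log_mul two_ne_zero hc.ne']
  linarith [log_le_sub_one_of_pos hc, log_two_lt_d9]

lemma sin_mul_log_two_mul_cos_le {φ : ℝ} (hφ0 : 0 ≤ φ) (hφ : φ < π / 2) :
    sin φ * log (2 * cos φ) ≤ φ * cos φ := by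
  have hcos : 0 < cos φ := cos_pos_of_mem_Ioo ⟨by linarith [pi_pos], hφ⟩
  have hsin : 0 ≤ sin φ := sin_nonneg_of_nonneg_of_le_pi hφ0 (by linarith [pi_pos])
  calc sin φ * log (2 * cos φ) ≤ sin φ * cos φ := by
        gcongr; exact (log_two_mul_lt hcos).le
    _ ≤ φ * cos φ := by gcongr; exact sin_le hφ0

lemma sin_mul_le_sin_mul_two_mul_cos_rpow {t φ : ℝ} (ht0 : 0 ≤ t) (ht1 : t ≤ 1)
    (hφ0 : 0 ≤ φ) (hφ : φ < π / 2) :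
    sin (t * φ) ≤ sin φ * (2 * cos φ) ^ (t - 1) := by
  have hcos : 0 < cos φ := cos_pos_of_mem_Ioo ⟨by linarith [pi_pos], hφ⟩
  have hsin : 0 ≤ sin φ := sin_nonneg_of_nonneg_of_le_pi hφ0 (by linarith [pi_pos])
  have htφ : t * φ ≤ φ := mul_le_of_le_one_left hφ0 ht1
  set L := log (2 * cos φ)
  calc sin (t * φ) ≤ sin φ + (t * φ - φ) * cos φ :=
        sin_le_sin_add_mul_cos ⟨by positivity, by linarith [pi_pos]⟩ ⟨hφ0, by linarith [pi_pos]⟩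
    _ = sin φ + (t - 1) * (φ * cos φ) := by ring
    _ ≤ sin φ + (t - 1) * (sin φ * L) := by
        gcongr sin φ + ?_
        exact mul_le_mul_of_nonpos_left (sin_mul_log_two_mul_cos_le hφ0 hφ) (by linarith)
    _ = sin φ * ((t - 1) * L + 1) := by ring
    _ ≤ sin φ * exp ((t - 1) * L) := by gcongr; exact add_one_le_exp _
    _ = sin φ * (2 * cos φ) ^ (t - 1) := by rw [rpow_def_of_pos (by positivity), mul_comm L]

lemma half_mul_rpow_eq_sin_arctan_mul (x t : ℝ) :
    x / 2 * (4 / (1 + x ^ 2)) ^ (t / 2) = sin (arctan x) * (2 * cos (arctan x)) ^ (t - 1) := by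
  have hcos : 0 < 2 * cos (arctan x) := by linarith [cos_arctan_pos x]
  have hsq : 4 / (1 + x ^ 2) = (2 * cos (arctan x)) ^ (2 : ℝ) := by
    rw [rpow_two, mul_pow, cos_sq_arctan]; ring
  have hsin : sin (arctan x) = x / 2 * (2 * cos (arctan x)) := by
    rw [sin_arctan, cos_arctan]; ring
  rw [hsq, ← rpow_mul hcos.le, rpow_sub_one hcos.ne', hsin]
  field_simp

end Real

theorem stmt15 (n : ℕ) (hn : 2 ≤ n) (x : ℝ) (hx : 0 ≤ x) :
    Real.sin (2 * Real.arctan x / n) ≤ (x / 2) * (4 / (1 + x ^ 2)) ^ ((1 : ℝ) / n) := by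
  have hn' : (2 : ℝ) ≤ n := by exact_mod_cast hn
  calc Real.sin (2 * Real.arctan x / n) = Real.sin (2 / n * Real.arctan x) := by ring_nf
    _ ≤ Real.sin (Real.arctan x) * (2 * Real.cos (Real.arctan x)) ^ (2 / n - 1 : ℝ) :=
        Real.sin_mul_le_sin_mul_two_mul_cos_rpow (by positivity)
          ((div_le_one (by positivity)).2 hn') (Real.arctan_nonneg.2 hx) (Real.arctan_lt_pi_div_two x)
    _ = (x / 2) * (4 / (1 + x ^ 2)) ^ ((1 : ℝ) / n) := by
        rw [← Real.half_mul_rpow_eq_sin_arctan_mul]; ring_nf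
end
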